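/- Let Γ be an additive subgroup of ℝ^e × ℝ^d, let π₁ : ℝ^e × ℝ^d → ℝ^e and π₂ : ℝ^e × ℝ^d → ℝ^d be the coordinate projections, and assume π₁ restricted to Γ is injective. For W ⊆ ℝ^d put Λ(W) = { π₁(x) : x ∈ Γ, π₂(x) ∈ W }. If two windows W, W' ⊆ ℝ^d are π₂(Γ)-equidecomposable, then Λ(W) and Λ(W') are bounded distance equivalent. -/
import Mathlib


/-- `X` and `Y` are `V`-equidecomposable: `X` splits into finitely many pairwise disjoint
pieces whose translates by vectors of `V` are pairwise disjoint with union `Y`. -/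
def Equidecomposable {E : Type*} [AddCommGroup E] (V : Set E) (X Y : Set E) : Prop :=
  ∃ (k : ℕ) (P : Fin k → Set E) (v : Fin k → E),
    (∀ i, v i ∈ V) ∧
    Pairwise (Function.onFun Disjoint P) ∧ (⋃ i, P i) = X ∧
    Pairwise (Function.onFun Disjoint (fun i => (fun x => x + v i) '' P i)) ∧
    (⋃ i, (fun x => x + v i) '' P i) = Y

/-- Bounded distance equivalence of point sets in `ℝ^e`. -/
def BDE {e : ℕ} (Λ Λ' : Set (EuclideanSpace ℝ (Fin e))) : Prop :=
  ∃ c : ℝ, 0 < c ∧ ∃ φ : Λ ≃ Λ',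
    ∀ x : Λ, ‖(x : EuclideanSpace ℝ (Fin e)) - (φ x : EuclideanSpace ℝ (Fin e))‖ < c

theorem equidecomposable_windows_bde {e d : ℕ}
    (Γ : AddSubgroup (EuclideanSpace ℝ (Fin e) × EuclideanSpace ℝ (Fin d)))
    -- `π₁` restricted to `Γ` is injective
    (hinj : Set.InjOn Prod.fst (Γ : Set (EuclideanSpace ℝ (Fin e) × EuclideanSpace ℝ (Fin d))))
    (W W' : Set (EuclideanSpace ℝ (Fin d)))
    (hequi : Equidecomposable
      (Prod.snd '' (Γ : Set (EuclideanSpace ℝ (Fin e) × EuclideanSpace ℝ (Fin d)))) W W') :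
    BDE (Prod.fst '' {x | x ∈ Γ ∧ x.2 ∈ W}) (Prod.fst '' {x | x ∈ Γ ∧ x.2 ∈ W'}) := by
  classical
  obtain ⟨k, P, v, hv, hPd, hPU, hQd, hQU⟩ := hequi
  -- choose lattice lifts of the translation vectors
  choose γ hγΓ hγv using hv
  set Λ : Set (EuclideanSpace ℝ (Fin e)) := Prod.fst '' {x | x ∈ Γ ∧ x.2 ∈ W} with hΛ
  set Λ' : Set (EuclideanSpace ℝ (Fin e)) := Prod.fst '' {x | x ∈ Γ ∧ x.2 ∈ W'} with hΛ'
  -- uniqueness of the lattice point above a point of ℝ^e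
  have key1 : ∀ a b : EuclideanSpace ℝ (Fin e) × EuclideanSpace ℝ (Fin d),
      a ∈ Γ → b ∈ Γ → a.1 = b.1 → a = b := fun a b ha hb h => hinj ha hb h
  -- uniqueness of the piece containing a point
  have keyP : ∀ i j s, s ∈ P i → s ∈ P j → i = j := by
    intro i j s hi hj
    by_contra hne
    exact Set.disjoint_left.mp (hPd hne) hi hj
  have keyQ : ∀ i j s, s ∈ (fun x => x + v i) '' P i → s ∈ (fun x => x + v j) '' P j →
      i = j := by
    intro i j s hi hj
    by_contra hne
    exact Set.disjoint_left.mp (hQd hne) hi hj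
  -- for each x ∈ Λ choose its lattice preimage g x and piece idx x
  have hg0 : ∀ x : Λ, ∃ a, (a ∈ Γ ∧ a.2 ∈ W) ∧ a.1 = (x : EuclideanSpace ℝ (Fin e)) :=
    fun x => by
      obtain ⟨a, ha, hax⟩ := x.2; exact ⟨a, ⟨ha.1, ha.2⟩, hax⟩
  choose g hg1 hgx using hg0
  have hgΓ : ∀ x : Λ, g x ∈ Γ := fun x => (hg1 x).1
  have hgW : ∀ x : Λ, (g x).2 ∈ W := fun x => (hg1 x).2
  have hidx0 : ∀ x : Λ, ∃ i, (g x).2 ∈ P i := by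
    intro x
    have := hgW x
    rw [← hPU] at this
    exact Set.mem_iUnion.mp this
  choose idx hidx using hidx0
  -- for each y ∈ Λ' choose its lattice preimage h and piece jdx
  have hh0 : ∀ y : Λ', ∃ a, (a ∈ Γ ∧ a.2 ∈ W') ∧ a.1 = (y : EuclideanSpace ℝ (Fin e)) :=
    fun y => by
      obtain ⟨a, ha, hax⟩ := y.2; exact ⟨a, ⟨ha.1, ha.2⟩, hax⟩
  choose h hh1 hhy using hh0
  have hhΓ : ∀ y : Λ', h y ∈ Γ := fun y => (hh1 y).1
  have hhW : ∀ y : Λ', (h y).2 ∈ W' := fun y => (hh1 y).2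
  have hjdx0 : ∀ y : Λ', ∃ j, (h y).2 ∈ (fun x => x + v j) '' P j := by
    intro y
    have := hhW y
    rw [← hQU] at this
    exact Set.mem_iUnion.mp this
  choose jdx hjdx using hjdx0
  choose z hzP hzv using hjdx
  -- the forward map
  have hFmem : ∀ x : Λ, ((g x + γ (idx x)).1 : EuclideanSpace ℝ (Fin e)) ∈ Λ' := by
    intro x
    refine ⟨g x + γ (idx x), ⟨add_mem (hgΓ x) (hγΓ (idx x)), ?_⟩, rfl⟩
    have : (g x + γ (idx x)).2 = (g x).2 + v (idx x) := by
      rw [Prod.snd_add, hγv]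
    rw [this, ← hQU]
    exact Set.mem_iUnion.mpr ⟨idx x, ⟨(g x).2, hidx x, rfl⟩⟩
  -- the backward map
  have hGmem : ∀ y : Λ', ((h y - γ (jdx y)).1 : EuclideanSpace ℝ (Fin e)) ∈ Λ := by
    intro y
    refine ⟨h y - γ (jdx y), ⟨sub_mem (hhΓ y) (hγΓ (jdx y)), ?_⟩, rfl⟩
    have : (h y - γ (jdx y)).2 = (h y).2 - v (jdx y) := by
      rw [Prod.snd_sub, hγv]
    rw [this, ← hzv y, ← hPU]
    exact Set.mem_iUnion.mpr ⟨jdx y, by simpa using hzP y⟩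
  set F : Λ → Λ' := fun x => ⟨(g x + γ (idx x)).1, hFmem x⟩ with hF
  set G : Λ' → Λ := fun y => ⟨(h y - γ (jdx y)).1, hGmem y⟩ with hG
  have hleft : Function.LeftInverse G F := by
    intro x
    have hy : h (F x) = g x + γ (idx x) := by
      refine key1 _ _ (hhΓ (F x)) (add_mem (hgΓ x) (hγΓ (idx x))) ?_
      rw [hhy (F x)]
    have hsnd : (h (F x)).2 ∈ (fun s => s + v (idx x)) '' P (idx x) := by
      rw [hy, Prod.snd_add, hγv]
      exact ⟨(g x).2, hidx x, rfl⟩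
    have hj : jdx (F x) = idx x := by
      refine keyQ _ _ ((h (F x)).2) ?_ hsnd
      exact ⟨z (F x), hzP (F x), hzv (F x)⟩
    apply Subtype.ext
    show (h (F x) - γ (jdx (F x))).1 = (x : EuclideanSpace ℝ (Fin e))
    rw [hj, hy, add_sub_cancel_right, hgx]
  have hright : Function.RightInverse G F := by
    intro y
    have hx : g (G y) = h y - γ (jdx y) := by
      refine key1 _ _ (hgΓ (G y)) (sub_mem (hhΓ y) (hγΓ (jdx y))) ?_
      rw [hgx (G y)]
    have hsnd : (g (G y)).2 ∈ P (jdx y) := by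
      have : (g (G y)).2 = (h y).2 - v (jdx y) := by rw [hx, Prod.snd_sub, hγv]
      rw [this, ← hzv y]
      simpa using hzP y
    have hi : idx (G y) = jdx y := keyP _ _ _ (hidx (G y)) hsnd
    apply Subtype.ext
    show (g (G y) + γ (idx (G y))).1 = (y : EuclideanSpace ℝ (Fin e))
    rw [hi, hx, sub_add_cancel, hhy]
  refine ⟨1 + ∑ i, ‖(γ i).1‖, by positivity, ⟨F, G, hleft, hright⟩, ?_⟩
  intro x
  show ‖(x : EuclideanSpace ℝ (Fin e)) - ((F x : EuclideanSpace ℝ (Fin e)))‖ < _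
  have hval : ((F x : EuclideanSpace ℝ (Fin e))) = (x : EuclideanSpace ℝ (Fin e)) + (γ (idx x)).1 := by
    show (g x + γ (idx x)).1 = _
    rw [Prod.fst_add, hgx]
  rw [hval]
  have : (x : EuclideanSpace ℝ (Fin e)) - ((x : EuclideanSpace ℝ (Fin e)) + (γ (idx x)).1)
      = -(γ (idx x)).1 := by abel
  rw [this, norm_neg]
  have hle : ‖(γ (idx x)).1‖ ≤ ∑ i, ‖(γ i).1‖ :=
    Finset.single_le_sum (f := fun i => ‖(γ i).1‖) (fun i _ => norm_nonneg _) (Finset.mem_univ (idx x))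
  linarith
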